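/- In an admissible triangle T of order n, if x_j appears in row d immediately below-left of b_{jk'} in row d−1, then after raising (or before lowering), a configuration of b_{jk} in row d with x_j immediately above-right cannot arise except from such a swap; formally: in the raised triangle R_d(T), every configuration consisting of x_j in row d−1 directly above-right of b_{jk} in row d arose from swapping b_{jk} and x_j, because the alternative source configuration (a_{jk} in row d−1 above y_k in row d) violates the monotone diagonal property. -/

import Mathlib

open Finset
open scoped Classical

/-- Symbols occurring in a triangle: `x i`, `y i` (indices `1,...,n` encoded by `Fin n`),
`a i j`, `b i j` (the edge `{i+1,j+1}` oriented from smaller to larger, resp. larger to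
smaller), and the numbers `1,...,n` of the bottom row. -/
inductive TSym (n : ℕ) where
  | x (i : Fin n)
  | y (i : Fin n)
  | a (i j : Fin n)
  | b (i j : Fin n)
  | num (i : Fin n)
deriving DecidableEq

/-- A triangle of order `n`: row `r` (0-indexed) has `r+1` entries. -/
def Tri (n : ℕ) := ∀ r : Fin n, Fin (r.val + 1) → TSym n

namespace TSym

variable {n : ℕ}

/-- The symbol lies in `𝒳`. -/
def isX : TSym n → Prop
  | .x _ => True
  | .y _ => True
  | _ => False

/-- The symbol lies in `𝒱_k`. -/
def isV (k : ℕ) : TSym n → Prop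
  | .a i j => j.val = i.val + k ∧ 0 < k
  | .b i j => j.val = i.val + k ∧ 0 < k
  | _ => False

/-- Well-formedness of a non-bottom entry: `a i j` and `b i j` require `i < j`;
numbers may not occur. -/
def wf : TSym n → Prop
  | .a i j => i < j
  | .b i j => i < j
  | .num _ => False
  | _ => True

/-- The left value of a symbol lying in a row of rank `t` (values are `1`-based). -/
def lval (t : ℕ) : TSym n → ℤ
  | .x i => (i.val : ℤ) + 1
  | .y j => (j.val : ℤ) + 1 - t
  | .a i _ => (i.val : ℤ) + 1
  | .b i _ => (i.val : ℤ) + 1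
  | .num i => (i.val : ℤ) + 1

/-- The right value of a symbol lying in a row of rank `t`. -/
def rval (t : ℕ) : TSym n → ℤ
  | .x i => (i.val : ℤ) + 1 + t
  | .y j => (j.val : ℤ) + 1
  | .a _ j => (j.val : ℤ) + 1
  | .b _ j => (j.val : ℤ) + 1
  | .num i => (i.val : ℤ) + 1

end TSym

variable {n : ℕ}

/-- Row `r` is an `𝒳`-row. -/
def IsXRow (t : Tri n) (r : Fin n) : Prop := ∀ i, (t r i).isX

/-- Row `r` has all entries in `𝒱_k`. -/
def IsVRowOf (t : Tri n) (r : Fin n) (k : ℕ) : Prop := ∀ i, (t r i).isV k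

/-- Row `r` is a `𝒱`-row. -/
def IsVRow (t : Tri n) (r : Fin n) : Prop := ∃ k, IsVRowOf t r k

/-- The bottom row is `(1,2,...,n)`. -/
def BottomOK (t : Tri n) : Prop :=
  ∀ (r : Fin n), r.val = n - 1 → ∀ i : Fin (r.val + 1),
    t r i = .num ⟨i.val, by have := i.isLt; have := r.isLt; omega⟩

/-- All non-bottom entries are well-formed. -/
def WellFormed (t : Tri n) : Prop :=
  ∀ r : Fin n, r.val < n - 1 → ∀ i, (t r i).wf

/-- `rk m` is the rank of (1-based) row `m`, for `0 ≤ m ≤ n`; Lean row index `r`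
corresponds to row `r+1`.  An admissible ranking: the bottom row has rank `0`,
row `n-1` has rank `1`, and going up, an `𝒳`-row keeps the rank while a row whose
entries lie in `𝒱_k` has rank `k` and raises the rank above it to `k+1`. -/
def IsRanking (t : Tri n) (rk : ℕ → ℕ) : Prop :=
  rk n = 0 ∧ (1 ≤ n → rk (n - 1) = 1) ∧
  ∀ r : Fin n, r.val < n - 1 →
    (IsXRow t r ∧ rk r.val = rk (r.val + 1)) ∨
    (IsVRowOf t r (rk (r.val + 1)) ∧ rk r.val = rk (r.val + 1) + 1)

/-- The monotone diagonal and monotone row properties: for every local arrangement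
`v` directly above consecutive entries `u, w`, we require `l(u) ≤ l(v)` (strict when
`u` is a `y`), `r(v) ≤ r(w)` (strict when `w` is an `x`), and `l(u) < l(w)`. -/
def MonoProps (t : Tri n) (rk : ℕ → ℕ) : Prop :=
  ∀ (r : Fin n) (hr : 1 ≤ r.val) (p : ℕ) (hp : p + 1 < r.val + 1),
    let u := t r ⟨p, by omega⟩
    let w := t r ⟨p + 1, by omega⟩
    let v := t ⟨r.val - 1, by have := r.isLt; omega⟩ ⟨p, by simp only [Fin.val_mk]; omega⟩
    (u.lval (rk (r.val + 1)) ≤ v.lval (rk r.val)) ∧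
    ((∃ j, u = .y j) → u.lval (rk (r.val + 1)) < v.lval (rk r.val)) ∧
    (v.rval (rk r.val) ≤ w.rval (rk (r.val + 1))) ∧
    ((∃ j, w = .x j) → v.rval (rk r.val) < w.rval (rk (r.val + 1))) ∧
    (u.lval (rk (r.val + 1)) < w.lval (rk (r.val + 1)))

/-- Admissibility of a triangle. -/
def IsAdmissible (t : Tri n) : Prop :=
  BottomOK t ∧ WellFormed t ∧ ∃ rk, IsRanking t rk ∧ MonoProps t rk

/-- The rank of the row with Lean index `r` (i.e. of row `r+1`), computed directly:
one more than the number of `𝒱`-rows strictly below it (above the bottom row). -/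
noncomputable def rankOf (t : Tri n) (r : ℕ) : ℕ :=
  1 + ((univ : Finset (Fin n)).filter fun s => r < s.val ∧ IsVRow t s).card

open MvPolynomial in
/-- The weight of a symbol. -/
noncomputable def TSym.weight : TSym n → MvPolynomial (Fin n ⊕ Fin n) ℤ
  | .x i => X (Sum.inl i)
  | .y j => X (Sum.inr j)
  | .a i _ => X (Sum.inl i)
  | .b _ j => X (Sum.inr j)
  | .num _ => 1

/-- The weight of a triangle: the product of the weights of its non-bottom entries. -/
noncomputable def weight (t : Tri n) : MvPolynomial (Fin n ⊕ Fin n) ℤ :=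
  ∏ r : Fin n, if r.val < n - 1 then ∏ i, (t r i).weight else 1

/-- The raising operator `R_d` (`1 ≤ d < n`), acting on (paper-indexed) rows `d-1`
and `d`, i.e. Lean rows `d-2` and `d-1`. -/
noncomputable def Raise (d : ℕ) (t : Tri n) : Tri n := fun r i =>
  if hu : 2 ≤ d ∧ r.val + 2 = d ∧ r.val + 1 < n then
    -- row d-1: swap with the entry diagonally below, else convert to an 𝒳-symbol
    match t r i with
    | .b j k =>
        if t ⟨r.val + 1, hu.2.2⟩ ⟨i.val, by have := i.isLt; simp only [Fin.val_mk]; omega⟩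
            = .x j then .x j else .y k
    | .a j k =>
        if t ⟨r.val + 1, hu.2.2⟩ ⟨i.val + 1, by have := i.isLt; simp only [Fin.val_mk]; omega⟩
            = .y k then .y k else .x j
    | s => s
  else if hl : r.val + 1 = d then
    -- row d: swap with the entry diagonally above, else convert to a 𝒱-symbol
    let tk := rankOf t r.val
    match t r i with
    | .x j =>
        if hi : i.val < r.val then
          match t ⟨r.val - 1, by have := r.isLt; omega⟩
              ⟨i.val, by simp only [Fin.val_mk]; omega⟩ with
          | .b j' k => if j' = j then .b j' k
              else if h2 : j.val + tk < n then .a j ⟨j.val + tk, h2⟩ else .x j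
          | _ => if h2 : j.val + tk < n then .a j ⟨j.val + tk, h2⟩ else .x j
        else if h2 : j.val + tk < n then .a j ⟨j.val + tk, h2⟩ else .x j
    | .y k =>
        if hi : 1 ≤ i.val then
          match t ⟨r.val - 1, by have := r.isLt; omega⟩
              ⟨i.val - 1, by have := i.isLt; simp only [Fin.val_mk]; omega⟩ with
          | .a j k' => if k' = k then .a j k'
              else if h2 : tk ≤ k.val then .b ⟨k.val - tk, by have := k.isLt; omega⟩ k
              else .y k
          | _ => if h2 : tk ≤ k.val then .b ⟨k.val - tk, by have := k.isLt; omega⟩ k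
              else .y k
        else if h2 : tk ≤ k.val then .b ⟨k.val - tk, by have := k.isLt; omega⟩ k else .y k
    | s => s
  else t r i

/-- The lowering operator `L_d` (`1 ≤ d < n`), inverse to `R_d`. -/
noncomputable def Lower (d : ℕ) (t : Tri n) : Tri n := fun r i =>
  if hu : 2 ≤ d ∧ r.val + 2 = d ∧ r.val + 1 < n then
    -- row d-1: swap with the entry diagonally below, else convert to a 𝒱-symbol
    let tk := rankOf t (r.val + 1)
    match t r i with
    | .x j =>
        (match t ⟨r.val + 1, hu.2.2⟩ ⟨i.val, by have := i.isLt; simp only [Fin.val_mk]; omega⟩ with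
          | .b j' k => if j' = j then .b j' k
              else if h2 : j.val + tk < n then .a j ⟨j.val + tk, h2⟩ else .x j
          | _ => if h2 : j.val + tk < n then .a j ⟨j.val + tk, h2⟩ else .x j)
    | .y k =>
        (match t ⟨r.val + 1, hu.2.2⟩
            ⟨i.val + 1, by have := i.isLt; simp only [Fin.val_mk]; omega⟩ with
          | .a j k' => if k' = k then .a j k'
              else if h2 : tk ≤ k.val then .b ⟨k.val - tk, by have := k.isLt; omega⟩ k
              else .y k
          | _ => if h2 : tk ≤ k.val then .b ⟨k.val - tk, by have := k.isLt; omega⟩ k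
              else .y k)
    | s => s
  else if hl : r.val + 1 = d then
    -- row d: swap with the entry diagonally above, else convert to an 𝒳-symbol
    match t r i with
    | .b j k =>
        if hi : i.val < r.val then
          (if t ⟨r.val - 1, by have := r.isLt; omega⟩
              ⟨i.val, by simp only [Fin.val_mk]; omega⟩ = .x j then .x j else .y k)
        else .y k
    | .a j k =>
        if hi : 1 ≤ i.val then
          (if t ⟨r.val - 1, by have := r.isLt; omega⟩
              ⟨i.val - 1, by have := i.isLt; simp only [Fin.val_mk]; omega⟩ = .y k
           then .y k else .x j)
        else .x j
    | s => s
  else t r i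

/-! In `R_d(T)` an entry `x_j` of row `d-1` comes either from `b_{jk'}` swapped with the `x_j`
below it or from a converted `a_{jk'}`; an entry `b_{jk}` of row `d` comes either from `x_j`
swapped with the `b_{jk}` above it or from a converted `y_k`, and then `j = k - t` with `t` the
rank of row `d`. Mixing the two alternatives puts `a_{jk'}` directly above `y_k` with
`l(y_k) = k + 1 - t = l(a_{jk'})`, against the strict monotone diagonal inequality. -/

lemma TSym.not_isV_of_isX {s : TSym n} {k : ℕ} (hX : s.isX) : ¬ s.isV k := by
  cases s <;> simp_all [TSym.isV, TSym.isX]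

lemma not_isVRow_of_bottomOK {t : Tri n} (hb : BottomOK t) {s : Fin n} (hs : s.val = n - 1) :
    ¬ IsVRow t s := by
  rintro ⟨k, hk⟩
  have h0 := hk 0
  rw [hb s hs 0] at h0
  exact h0

lemma not_isVRow_of_isXRow {t : Tri n} {s : Fin n} (hX : IsXRow t s) : ¬ IsVRow t s :=
  fun ⟨_, hk⟩ => TSym.not_isV_of_isX (hX 0) (hk 0)

lemma rankOf_eq_rankOf_succ_add (t : Tri n) (r : ℕ) (hr : r + 1 < n) :
    rankOf t r = rankOf t (r + 1) + if IsVRow t ⟨r + 1, hr⟩ then 1 else 0 := by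
  have hsplit : ((univ : Finset (Fin n)).filter fun s => r < s.val ∧ IsVRow t s)
      = ((univ : Finset (Fin n)).filter fun s => r + 1 < s.val ∧ IsVRow t s) ∪
        ((univ : Finset (Fin n)).filter fun s => s = ⟨r + 1, hr⟩ ∧ IsVRow t s) := by
    ext s
    simp only [mem_union, mem_filter, mem_univ, true_and, Fin.ext_iff]
    grind
  have hdisj : Disjoint ((univ : Finset (Fin n)).filter fun s => r + 1 < s.val ∧ IsVRow t s)
      ((univ : Finset (Fin n)).filter fun s => s = ⟨r + 1, hr⟩ ∧ IsVRow t s) := by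
    rw [disjoint_filter]
    rintro s - ⟨hlt, -⟩ ⟨rfl, -⟩
    exact lt_irrefl _ hlt
  have hsingle : ((univ : Finset (Fin n)).filter fun s => s = ⟨r + 1, hr⟩ ∧ IsVRow t s).card
      = if IsVRow t ⟨r + 1, hr⟩ then 1 else 0 := by
    split_ifs with hV
    · rw [card_eq_one]
      exact ⟨⟨r + 1, hr⟩, by ext s; simp only [mem_filter, mem_univ, true_and, mem_singleton]; grind⟩
    · rw [card_eq_zero, filter_eq_empty_iff]
      rintro s - ⟨rfl, hV'⟩
      exact hV hV'
  rw [rankOf, rankOf, hsplit, card_union_of_disjoint hdisj, hsingle, add_assoc]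

theorem IsRanking.rankOf_eq {t : Tri n} {rk : ℕ → ℕ} (hrk : IsRanking t rk) (hb : BottomOK t)
    {r : ℕ} (hr : r + 1 < n) : rankOf t r = rk (r + 1) := by
  refine Nat.decreasingInduction (n := n - 2) (motive := fun r _ => rankOf t r = rk (r + 1))
    ?_ ?_ (show r ≤ n - 2 by omega)
  · intro r hlt ih
    rw [rankOf_eq_rankOf_succ_add t r (by omega), ih]
    rcases hrk.2.2 ⟨r + 1, by omega⟩ (by simp only; omega) with ⟨hX, hrank⟩ | ⟨hV, hrank⟩
    · rw [if_neg (not_isVRow_of_isXRow hX)]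
      exact hrank.symm
    · rw [if_pos ⟨_, hV⟩]
      exact hrank.symm
  · have hempty : ((univ : Finset (Fin n)).filter fun s => n - 2 < s.val ∧ IsVRow t s) = ∅ :=
      filter_eq_empty_iff.2 fun s _ ⟨hlt, hV⟩ => not_isVRow_of_bottomOK hb (by omega) hV
    rw [rankOf, hempty, show n - 2 + 1 = n - 1 by omega, hrk.2.1 (by omega)]
    rfl

lemma raise_upper_eq_x_cases {d : ℕ} {t : Tri n} {r r' : Fin n} {i : Fin (r.val + 1)}
    {i' : Fin (r'.val + 1)} {j : Fin n} (h : Raise d t r i = .x j) (hr : r.val + 2 = d)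
    (hr' : r'.val = r.val + 1) (hi : i'.val = i.val) :
    (∃ k, t r i = .b j k ∧ t r' i' = .x j) ∨ (∃ k, t r i = .a j k) ∨ t r i = .x j := by
  obtain ⟨r', hr'n⟩ := r'
  obtain rfl : r' = r.val + 1 := hr'
  obtain ⟨i', hi'⟩ := i'
  obtain rfl : i' = i.val := hi
  rw [Raise, dif_pos ⟨by omega, hr, hr'n⟩] at h
  rcases hs : t r i with j₀ | k₀ | ⟨a₁, a₂⟩ | ⟨b₁, b₂⟩ | m <;>
    simp only [hs, reduceCtorEq, TSym.x.injEq, TSym.a.injEq, TSym.b.injEq] at h ⊢ <;>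
    grind

lemma raise_lower_eq_b_cases {d : ℕ} {t : Tri n} {r r' : Fin n} {i : Fin (r.val + 1)}
    {i' : Fin (r'.val + 1)} {j k : Fin n} (h : Raise d t r i = .b j k) (hr : r.val + 1 = d)
    (hr' : r'.val + 1 = r.val) (hi : i'.val = i.val) :
    (t r i = .x j ∧ t r' i' = .b j k) ∨ (t r i = .y k ∧ j.val + rankOf t r.val = k.val) ∨
      t r i = .b j k := by
  obtain ⟨r', hr'n⟩ := r'
  obtain rfl : r' = r.val - 1 := by simp only at hr'; omega
  obtain ⟨i', hi'⟩ := i'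
  obtain rfl : i' = i.val := hi
  rw [Raise, dif_neg (by omega), dif_pos hr] at h
  rcases hs : t r i with j₀ | k₀ | ⟨a₁, a₂⟩ | ⟨b₁, b₂⟩ | m <;>
    simp only [hs, reduceCtorEq, TSym.x.injEq, TSym.y.injEq, TSym.b.injEq] at h ⊢
  · rw [dif_pos (by omega)] at h
    split at h <;> grind
  · split_ifs at h <;> (try split at h) <;> grind
  · exact Or.inr (Or.inr h)

lemma MonoProps.lval_lt_of_eq_y {t : Tri n} {rk : ℕ → ℕ} (h : MonoProps t rk) {r r' : Fin n}
    {i : Fin (r.val + 1)} {i' : Fin (r'.val + 1)} {k : Fin n} (hy : t r i = .y k)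
    (hr' : r'.val + 1 = r.val) (hi : i.val < r.val) (hi' : i'.val = i.val) :
    (TSym.y k).lval (rk (r.val + 1)) < (t r' i').lval (rk r.val) := by
  obtain ⟨r', hr'n⟩ := r'
  obtain rfl : r' = r.val - 1 := by simp only at hr'; omega
  obtain ⟨i', hi'n⟩ := i'
  obtain rfl : i' = i.val := hi'
  have hmono := (h r (by omega) i.val (by omega)).2.1 ⟨k, hy⟩
  rwa [← hy]

/-- In the raised triangle `R_d(T)`, a configuration of `x_j` in (paper) row `d-1`
directly above-right of `b_{jk}` in row `d` can only arise from the swap of these two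
entries (the alternative source, `a_{jk}` above `y_k`, is excluded by the monotone
diagonal property of `T`). -/
theorem stmt16 (n d : ℕ) (t : Tri n) (h2 : d < n) (h3 : 2 ≤ d)
    (hadm : IsAdmissible t)
    (hX : IsXRow t ⟨d - 1, by omega⟩)
    (hV : IsVRow t ⟨d - 2, by omega⟩)
    (p : ℕ) (hp : p < d - 1) (j k : Fin n)
    (hxj : Raise d t ⟨d - 2, by omega⟩ ⟨p, by simp only [Fin.val_mk]; omega⟩ = .x j)
    (hbk : Raise d t ⟨d - 1, by omega⟩ ⟨p, by simp only [Fin.val_mk]; omega⟩ = .b j k) :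
    t ⟨d - 2, by omega⟩ ⟨p, by simp only [Fin.val_mk]; omega⟩ = .b j k ∧
    t ⟨d - 1, by omega⟩ ⟨p, by simp only [Fin.val_mk]; omega⟩ = .x j := by
  obtain ⟨hb, -, rk, hrk, hmono⟩ := hadm
  obtain ⟨kV, hkV⟩ := hV
  have hbelow := raise_lower_eq_b_cases (r' := ⟨d - 2, by omega⟩) (i' := ⟨p, by simp only; omega⟩)
    hbk (by simp only; omega) (by simp only; omega) rfl
  rcases raise_upper_eq_x_cases (r' := ⟨d - 1, by omega⟩) (i' := ⟨p, by simp only; omega⟩)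
    hxj (by simp only; omega) (by simp only; omega) rfl with ⟨_, -, hx⟩ | ⟨_, ha⟩ | hx
  · rcases hbelow with ⟨-, hb'⟩ | ⟨hy, -⟩ | hb'
    · exact ⟨hb', hx⟩
    · simp [hx] at hy
    · simp [hx] at hb'
  · rcases hbelow with ⟨-, hb'⟩ | ⟨hy, hjk⟩ | hb'
    · simp [ha] at hb'
    · have hlt := hmono.lval_lt_of_eq_y (r' := ⟨d - 2, by omega⟩)
        (i' := ⟨p, by simp only; omega⟩) hy (by simp only; omega) (by simp only; omega) rfl
      rw [ha, ← hrk.rankOf_eq hb (by simp only; omega)] at hlt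
      simp only [TSym.lval] at hlt hjk
      omega
    · simpa [hb', TSym.isX] using hX ⟨p, by simp only; omega⟩
  · simpa [hx, TSym.isV] using hkV ⟨p, by simp only; omega⟩
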